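/- Let g be a centerless Lie 2-algebra with MT(g) = 3, standard maximal torus t with toral basis {t1, t2, t3} and dual basis {α, β, γ} of t*, whose t-root set is Δ = {α, β, γ, α+β, α+γ, β+γ, α+β+γ}. If dim(g_α) ≥ dim(g_β) and dim(g_β) > dim(g_ξ) for every ξ ∈ Δ \ {α, β}, then I := span{t3, t1 + t2} ⊕ n ⊕ ⊕_{ξ∈Δ} g_ξ is an ideal of g. -/

import Mathlib

/-- A 2-map on a Lie algebra over the field `F` (char 2 version of a restricted structure):
`(c • x)^[2] = c^2 • x^[2]`, `ad (x^[2]) = (ad x) ∘ (ad x)` and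
`(x+y)^[2] = x^[2] + y^[2] + [x,y]`. -/
structure IsTwoMap (F : Type*) [Field F] {g : Type*} [LieRing g] [LieAlgebra F g]
    (p : g → g) : Prop where
  smul_pow : ∀ (c : F) (x : g), p (c • x) = (c ^ 2) • p x
  ad_pow : ∀ x y : g, ⁅p x, y⁆ = ⁅x, ⁅x, y⁆⁆
  add_pow : ∀ x y : g, p (x + y) = p x + p y + ⁅x, y⁆

/-- An element is 2-nilpotent if some iterate of the 2-map annihilates it. -/
def IsTwoNilpotent {g : Type*} [Zero g] (p : g → g) (x : g) : Prop :=
  ∃ k : ℕ, p^[k] x = 0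

/-- A torus of a Lie 2-algebra: a Lie subalgebra closed under the 2-map on which the
2-map is invertible (bijective). -/
def IsTorus (F : Type*) [Field F] {g : Type*} [LieRing g] [LieAlgebra F g]
    (p : g → g) (t : LieSubalgebra F g) : Prop :=
  (∀ x ∈ t, p x ∈ t) ∧ Set.BijOn p (t : Set g) (t : Set g)

/-- A maximal torus of a Lie 2-algebra. -/
def IsMaxTorus (F : Type*) [Field F] {g : Type*} [LieRing g] [LieAlgebra F g]
    (p : g → g) (t : LieSubalgebra F g) : Prop :=
  IsTorus F p t ∧ ∀ s : LieSubalgebra F g, IsTorus F p s → t ≤ s → s = t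

/-- The weight (root) space of a linear functional `lam` on a torus `t`:
`g_lam = {v | [x, v] = lam x • v for all x ∈ t}`. -/
def rootSpace {F : Type*} [Field F] {g : Type*} [LieRing g] [LieAlgebra F g]
    (t : LieSubalgebra F g) (lam : Module.Dual F t) : Submodule F g where
  carrier := {v | ∀ x : t, ⁅(x : g), v⁆ = lam x • v}
  add_mem' := by
    intro a b ha hb x
    rw [lie_add, ha x, hb x, smul_add]
  zero_mem' := by
    intro x
    rw [lie_zero, smul_zero]
  smul_mem' := by
    intro c v hv x
    rw [lie_smul, hv x, smul_comm]

/-- The set of `t`-roots: nonzero functionals with nonzero root space. -/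
def rootSet {F : Type*} [Field F] {g : Type*} [LieRing g] [LieAlgebra F g]
    (t : LieSubalgebra F g) : Set (Module.Dual F t) :=
  {lam | lam ≠ 0 ∧ rootSpace t lam ≠ ⊥}

/-- The subspace `N(σ, δ) = {x ∈ g_σ : [x, g_σ] ⊆ n and [[x, g_δ], g_{σ+δ}] ⊆ n}`,
given as `Nspace n g_σ g_δ g_{σ+δ}`. -/
def Nspace {F : Type*} [Field F] {g : Type*} [LieRing g] [LieAlgebra F g]
    (n gs gd gsd : Submodule F g) : Submodule F g where
  carrier := {x | x ∈ gs ∧ (∀ y ∈ gs, ⁅x, y⁆ ∈ n) ∧ ∀ z ∈ gd, ∀ w ∈ gsd, ⁅⁅x, z⁆, w⁆ ∈ n}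
  add_mem' := by
    intro a b ha hb
    obtain ⟨ha1, ha2, ha3⟩ := ha
    obtain ⟨hb1, hb2, hb3⟩ := hb
    refine ⟨gs.add_mem ha1 hb1, fun y hy => ?_, fun z hz w hw => ?_⟩
    · rw [add_lie]
      exact n.add_mem (ha2 y hy) (hb2 y hy)
    · rw [add_lie, add_lie]
      exact n.add_mem (ha3 z hz w hw) (hb3 z hz w hw)
  zero_mem' := by
    refine ⟨gs.zero_mem, fun y hy => ?_, fun z hz w hw => ?_⟩
    · rw [zero_lie]; exact n.zero_mem
    · rw [zero_lie, zero_lie]; exact n.zero_mem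
  smul_mem' := by
    intro c x hx
    obtain ⟨h1, h2, h3⟩ := hx
    refine ⟨gs.smul_mem c h1, fun y hy => ?_, fun z hz w hw => ?_⟩
    · rw [smul_lie]; exact n.smul_mem c (h2 y hy)
    · rw [smul_lie, smul_lie]; exact n.smul_mem c (h3 z hz w hw)


/-!
For a toral element `s` (`s^[2] = s`) the map `ad s` is idempotent, so the commuting maps
`ad t₁, ad t₂, ad t₃` are simultaneously diagonalizable and `g` is the sum of its root spaces.
Every `g_λ` with `λ ≠ 0` lies in `I`, `[g_λ, g_μ] ⊆ g_{λ+μ}` and `[g_0, n] ⊆ n`, so the only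
brackets that can leave `I` are `[g_ξ, g_ξ] ⊆ g_0 = t ⊕ n` (in characteristic 2, `-ξ = ξ`). As
`[v, w] = (v + w)^[2] - v^[2] - w^[2]`, it suffices that the toral part `h` of `z^[2]`,
`z ∈ g_ξ`, lies in `ker (α + β) = span {t₃, t₁ + t₂}`. On `g_μ` the square `(ad z)² = ad z^[2]`
acts as `μ h` plus a nilpotent map; hence `ξ h = 0`, and if `μ h ≠ 0` for `μ ∈ {α, β}` then
`ad z` embeds `g_μ` into `g_{μ+ξ}`, which the dimension hypotheses forbid unless `ξ = α + β`.
-/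

lemma CharTwo.add_self_eq_zero_of_module {R M : Type*} [Ring R] [CharP R 2] [AddCommGroup M]
    [Module R M] (v : M) : v + v = 0 := by
  rw [← two_smul R v, CharTwo.two_eq_zero, zero_smul]

open Polynomial in
lemma Module.End.isSemisimple_of_isIdempotentElem {K M : Type*} [Field K] [AddCommGroup M]
    [Module K M] {f : Module.End K M} (hf : IsIdempotentElem f) : f.IsSemisimple := by
  refine isSemisimple_of_squarefree_aeval_eq_zero (p := X ^ 2 - X) ?_ (by simp [hf.eq, sq])
  refine Separable.squarefree ⟨-C 4, C 2 * X - 1, ?_⟩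
  simp only [derivative_sub, derivative_X_pow, derivative_X, map_ofNat, Nat.cast_ofNat]
  ring

lemma Module.End.iSup_eigenspace_eq_top_of_isIdempotentElem {K M : Type*} [Field K]
    [AddCommGroup M] [Module K M] {f : Module.End K M} (hf : IsIdempotentElem f) :
    ⨆ μ, f.eigenspace μ = ⊤ := by
  refine eq_top_iff.mpr fun x _ => ?_
  have h0 : x - f x ∈ f.eigenspace 0 := by simp [← Module.End.mul_apply, hf.eq]
  have h1 : f x ∈ f.eigenspace 1 := by simp [← Module.End.mul_apply, hf.eq]
  simpa using add_mem (Submodule.mem_iSup_of_mem 0 h0) (Submodule.mem_iSup_of_mem 1 h1)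

lemma Module.End.iSup_iInf_eigenspace_eq_top_of_isIdempotentElem {K M ι : Type*} [Field K]
    [AddCommGroup M] [Module K M] [FiniteDimensional K M] (f : ι → Module.End K M)
    (hcomm : Pairwise fun i j => Commute (f i) (f j)) (hf : ∀ i, IsIdempotentElem (f i)) :
    ⨆ χ : ι → K, ⨅ i, (f i).eigenspace (χ i) = ⊤ := by
  have := iSup_iInf_maxGenEigenspace_eq_top_of_iSup_maxGenEigenspace_eq_top_of_commute f hcomm
    fun i => eq_top_iff.mpr <| (iSup_eigenspace_eq_top_of_isIdempotentElem (hf i)).ge.trans <|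
      iSup_mono fun _ => eigenspace_le_maxGenEigenspace
  simpa only [fun i => (isSemisimple_of_isIdempotentElem (hf i)).isFinitelySemisimple
    |>.maxGenEigenspace_eq_eigenspace] using this

lemma LieAlgebra.commute_ad_of_lie_eq_zero {R L : Type*} [CommRing R] [LieRing L]
    [LieAlgebra R L] {x y : L} (h : ⁅x, y⁆ = 0) : Commute (ad R L x) (ad R L y) := by
  ext z
  simp [leibniz_lie x y z, h]

lemma LieAlgebra.eq_zero_of_smul_add_lie_eq_zero {K L : Type*} [Field K] [LieRing L]
    [LieAlgebra K L] {m u : L} (hm : IsNilpotent (ad K L m)) {c : K} (hc : c ≠ 0)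
    (h : c • u + ⁅m, u⁆ = 0) : u = 0 := by
  have hunit : IsUnit (algebraMap K (Module.End K L) c + ad K L m) :=
    hm.isUnit_add_left_of_commute ((isUnit_iff_ne_zero.mpr hc).map _)
      (Algebra.commute_algebraMap_right c _)
  refine (Module.End.isUnit_iff _).mp hunit |>.injective ?_
  simpa using h

section RootSpace

variable {F : Type*} [Field F] {g : Type*} [LieRing g] [LieAlgebra F g] {t : LieSubalgebra F g}

lemma mem_rootSpace_iff {lam : Module.Dual F t} {v : g} :
    v ∈ rootSpace t lam ↔ ∀ s : t, ⁅(s : g), v⁆ = lam s • v :=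
  Iff.rfl

lemma mem_rootSpace_zero_iff {v : g} : v ∈ rootSpace t 0 ↔ ∀ s : t, ⁅(s : g), v⁆ = 0 := by
  simp [mem_rootSpace_iff]

lemma lie_coe_eq_neg_smul {lam : Module.Dual F t} {v : g} (hv : v ∈ rootSpace t lam) (s : t) :
    ⁅v, (s : g)⁆ = -(lam s • v) := by
  rw [← lie_skew, hv s]

lemma lie_mem_rootSpace_add {μ ν : Module.Dual F t} {v w : g} (hv : v ∈ rootSpace t μ)
    (hw : w ∈ rootSpace t ν) : ⁅v, w⁆ ∈ rootSpace t (μ + ν) := fun s => by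
  rw [leibniz_lie, hv s, hw s, smul_lie, lie_smul, LinearMap.add_apply, add_smul]

lemma rootSpace_le_iSup_rootSet {ν : Module.Dual F t} (hν : ν ≠ 0) :
    rootSpace t ν ≤ ⨆ ξ ∈ rootSet t, rootSpace t ξ := by
  by_cases h : rootSpace t ν = ⊥
  · simp [h]
  · exact le_iSup₂_of_le ν ⟨hν, h⟩ le_rfl

lemma iInf_eigenspace_ad_le_rootSpace {ι : Type*} [Fintype ι] [DecidableEq ι] {u : ι → t}
    (hu : Submodule.span F (Set.range u) = ⊤) {φ : ι → Module.Dual F t}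
    (hφ : ∀ i j, φ i (u j) = if i = j then 1 else 0) (χ : ι → F) :
    ⨅ i, (LieAlgebra.ad F g (u i)).eigenspace (χ i) ≤ rootSpace t (∑ i, χ i • φ i) := by
  intro v hv
  simp only [Submodule.mem_iInf, Module.End.mem_eigenspace_iff, LieAlgebra.ad_apply] at hv
  intro s
  induction (hu ▸ Submodule.mem_top : s ∈ Submodule.span F (Set.range u)) using
    Submodule.span_induction with
  | mem _ hs =>
    obtain ⟨j, rfl⟩ := hs
    simpa [hφ] using hv j
  | zero => simp
  | add a b _ _ ha hb => rw [map_add, add_smul, ← ha, ← hb, ← add_lie]; rfl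
  | smul c a _ ha => simp [smul_lie, ha, smul_smul]

lemma lie_mem_sup_of_mem_rootSpace {S n : Submodule F g} (hS : S ≤ t.toSubmodule)
    (hn0 : n ≤ rootSpace t 0) (hstd : ∀ x ∈ rootSpace t 0, ∀ y ∈ n, ⁅x, y⁆ ∈ n)
    (hopp : ∀ ξ ∈ rootSet t, ∀ v ∈ rootSpace t (-ξ), ∀ w ∈ rootSpace t ξ, ⁅v, w⁆ ∈ S ⊔ n)
    {lam : Module.Dual F t} {v : g} (hv : v ∈ rootSpace t lam) {y : g}
    (hy : y ∈ S ⊔ n ⊔ ⨆ ξ ∈ rootSet t, rootSpace t ξ) :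
    ⁅v, y⁆ ∈ S ⊔ n ⊔ ⨆ ξ ∈ rootSet t, rootSpace t ξ := by
  set I := S ⊔ n ⊔ ⨆ ξ ∈ rootSet t, rootSpace t ξ
  have hI : ∀ {ν : Module.Dual F t}, ν ≠ 0 → ∀ {w}, w ∈ rootSpace t ν → w ∈ I :=
    fun hν _ hw => Submodule.mem_sup_right (rootSpace_le_iSup_rootSet hν hw)
  suffices I ≤ I.comap (LieAlgebra.ad F g v) from this hy
  refine sup_le (sup_le (fun s hs => ?_) (fun m hm => ?_)) (iSup₂_le fun ξ hξ w hw => ?_)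
  all_goals rw [Submodule.mem_comap, LieAlgebra.ad_apply]
  · rw [show s = ((⟨s, hS hs⟩ : t) : g) from rfl, lie_coe_eq_neg_smul hv]
    rcases eq_or_ne lam 0 with rfl | hlam
    · simp
    · exact hI hlam (neg_mem (Submodule.smul_mem _ _ hv))
  · rcases eq_or_ne lam 0 with rfl | hlam
    · exact Submodule.mem_sup_left (Submodule.mem_sup_right (hstd v hv m hm))
    · exact hI (by rwa [add_zero]) (lie_mem_rootSpace_add hv (hn0 hm))
  · rcases eq_or_ne (lam + ξ) 0 with h | h
    · rw [eq_neg_of_add_eq_zero_left h] at hv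
      exact Submodule.mem_sup_left (hopp ξ hξ v hv w hw)
    · exact hI h (lie_mem_rootSpace_add hv hw)

lemma coe_mem_span_of_add_apply_eq_zero [CharP F 2] {t₁ t₂ t₃ : t}
    (hspan : Submodule.span F ({t₁, t₂, t₃} : Set t) = ⊤) {α β : Module.Dual F t}
    (hα : α t₁ = 1 ∧ α t₂ = 0 ∧ α t₃ = 0) (hβ : β t₁ = 0 ∧ β t₂ = 1 ∧ β t₃ = 0) {h : t}
    (hh : (α + β) h = 0) :
    (h : g) ∈ Submodule.span F ({(t₃ : g), (t₁ : g) + (t₂ : g)} : Set g) := by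
  obtain ⟨a, b, c, rfl⟩ := Submodule.mem_span_triple.mp (hspan ▸ Submodule.mem_top :
    h ∈ Submodule.span F ({t₁, t₂, t₃} : Set t))
  obtain rfl : a = b := by simpa [hα, hβ, CharTwo.add_eq_zero] using hh
  refine Submodule.mem_span_pair.mpr ⟨c, a, ?_⟩
  push_cast
  rw [smul_add]
  abel

lemma finrank_rootSpace_lt_of_ne [FiniteDimensional F g] {α β : Module.Dual F t}
    (hβ : β ∈ rootSet t)
    (hbig : ∀ ξ ∈ rootSet t, ξ ≠ α → ξ ≠ β →
      Module.finrank F (rootSpace t ξ) < Module.finrank F (rootSpace t β))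
    {ν : Module.Dual F t} (hν : ν ≠ 0) (hνα : ν ≠ α) (hνβ : ν ≠ β) :
    Module.finrank F (rootSpace t ν) < Module.finrank F (rootSpace t β) := by
  by_cases h : rootSpace t ν = ⊥
  · rw [h, finrank_bot]
    exact Nat.pos_of_ne_zero (Submodule.finrank_eq_zero.not.mpr hβ.2)
  · exact hbig ν ⟨hν, h⟩ hνα hνβ

end RootSpace

namespace IsTwoMap

open LieAlgebra

variable {F : Type*} [Field F] {g : Type*} [LieRing g] [LieAlgebra F g] {p : g → g}
  {t : LieSubalgebra F g}

lemma map_zero (hp : IsTwoMap F p) : p 0 = 0 := by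
  simpa using hp.smul_pow 0 0

lemma ad_map (hp : IsTwoMap F p) (x : g) : ad F g (p x) = ad F g x * ad F g x := by
  ext y
  simp [hp.ad_pow]

lemma ad_pow_two_pow (hp : IsTwoMap F p) (x : g) (k : ℕ) :
    ad F g x ^ 2 ^ k = ad F g (p^[k] x) := by
  induction k with
  | zero => simp
  | succ k ih => rw [pow_succ, pow_mul, ih, sq, ← hp.ad_map, Function.iterate_succ_apply']

lemma isNilpotent_ad (hp : IsTwoMap F p) {x : g} (hx : IsTwoNilpotent p x) :
    IsNilpotent (ad F g x) :=
  let ⟨k, hk⟩ := hx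
  ⟨2 ^ k, by rw [hp.ad_pow_two_pow, hk, _root_.map_zero]⟩

lemma isIdempotentElem_ad (hp : IsTwoMap F p) {x : g} (hx : p x = x) :
    IsIdempotentElem (ad F g x) := by
  rw [IsIdempotentElem, ← hp.ad_map, hx]

lemma lie_mem_of_forall_map_mem (hp : IsTwoMap F p) {V W : Submodule F g}
    (h : ∀ z ∈ V, p z ∈ W) {v w : g} (hv : v ∈ V) (hw : w ∈ V) : ⁅v, w⁆ ∈ W := by
  rw [show ⁅v, w⁆ = p (v + w) - p v - p w by rw [hp.add_pow]; abel]
  exact sub_mem (sub_mem (h _ (add_mem hv hw)) (h v hv)) (h w hw)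

lemma iSup_rootSpace_eq_top [FiniteDimensional F g] (hp : IsTwoMap F p)
    {ι : Type*} [Fintype ι] [DecidableEq ι] {u : ι → t} (htor : ∀ i, p (u i) = u i)
    (hcomm : ∀ i j, ⁅(u i : g), (u j : g)⁆ = 0) (hu : Submodule.span F (Set.range u) = ⊤)
    {φ : ι → Module.Dual F t} (hφ : ∀ i j, φ i (u j) = if i = j then 1 else 0) :
    ⨆ lam, rootSpace t lam = ⊤ := by
  rw [eq_top_iff, ← Module.End.iSup_iInf_eigenspace_eq_top_of_isIdempotentElem
    (fun i => ad F g (u i)) (fun i j _ => commute_ad_of_lie_eq_zero (hcomm i j))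
    (fun i => hp.isIdempotentElem_ad (htor i))]
  exact iSup_le fun χ => (iInf_eigenspace_ad_le_rootSpace hu hφ χ).trans (le_iSup _ _)

lemma map_mem_rootSpace_zero (hp : IsTwoMap F p) {ξ : Module.Dual F t} {z : g}
    (hz : z ∈ rootSpace t ξ) : p z ∈ rootSpace t 0 := by
  refine mem_rootSpace_zero_iff.mpr fun s => ?_
  rw [← lie_skew, hp.ad_pow, lie_coe_eq_neg_smul hz, lie_neg, lie_smul, lie_self]
  simp

lemma eq_zero_of_lie_eq_zero (hp : IsTwoMap F p) {z m : g} {h : t} (hpz : p z = h + m)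
    (hm : IsNilpotent (ad F g m)) {μ : Module.Dual F t} (hμ : μ h ≠ 0) {v : g}
    (hv : v ∈ rootSpace t μ) (hzv : ⁅z, v⁆ = 0) : v = 0 := by
  refine eq_zero_of_smul_add_lie_eq_zero hm hμ ?_
  rw [← hv h, ← add_lie, ← hpz, hp.ad_pow, hzv, lie_zero]

lemma finrank_rootSpace_le [FiniteDimensional F g] (hp : IsTwoMap F p)
    {ξ μ : Module.Dual F t} {z m : g} {h : t} (hz : z ∈ rootSpace t ξ) (hpz : p z = h + m)
    (hm : IsNilpotent (ad F g m)) (hμ : μ h ≠ 0) :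
    Module.finrank F (rootSpace t μ) ≤ Module.finrank F (rootSpace t (μ + ξ)) := by
  let A : rootSpace t μ →ₗ[F] rootSpace t (μ + ξ) :=
    (ad F g z).restrict fun v hv => add_comm ξ μ ▸ lie_mem_rootSpace_add hz hv
  refine LinearMap.finrank_le_finrank_of_injective (f := A) ?_
  refine (injective_iff_map_eq_zero A).mpr fun v hv => Subtype.ext ?_
  exact hp.eq_zero_of_lie_eq_zero hpz hm hμ v.2 (congrArg Subtype.val hv)

lemma root_apply_eq_zero (hp : IsTwoMap F p) {n : Submodule F g}
    (hdisj : Disjoint t.toSubmodule n) {ξ : Module.Dual F t} {z m : g} {h : t}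
    (hz : z ∈ rootSpace t ξ) (hpz : p z = h + m) (hmn : m ∈ n)
    (hm : IsNilpotent (ad F g m)) : ξ h = 0 := by
  by_contra hξ
  have hz0 : z = 0 := hp.eq_zero_of_lie_eq_zero hpz hm hξ hz (lie_self z)
  rw [hz0, hp.map_zero, eq_comm, add_eq_zero_iff_eq_neg] at hpz
  have h0 : h = 0 := Subtype.ext <|
    Submodule.disjoint_def.mp hdisj _ h.2 (hpz ▸ n.neg_mem hmn)
  exact hξ (by rw [h0, _root_.map_zero])

lemma add_apply_eq_zero_of_map_eq [CharP F 2] [FiniteDimensional F g] (hp : IsTwoMap F p)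
    {n : Submodule F g} (hdisj : Disjoint t.toSubmodule n)
    (hnil : ∀ m ∈ n, IsNilpotent (ad F g m)) {α β : Module.Dual F t}
    (hab : Module.finrank F (rootSpace t β) ≤ Module.finrank F (rootSpace t α))
    (hsmall : ∀ ν : Module.Dual F t, ν ≠ 0 → ν ≠ α → ν ≠ β →
      Module.finrank F (rootSpace t ν) < Module.finrank F (rootSpace t β))
    {ξ : Module.Dual F t} (hξ : ξ ≠ 0) {z m : g} {h : t} (hz : z ∈ rootSpace t ξ)
    (hpz : p z = h + m) (hmn : m ∈ n) : (α + β) h = 0 := by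
  have hξh : ξ h = 0 := hp.root_apply_eq_zero hdisj hz hpz hmn (hnil m hmn)
  by_cases hξαβ : ξ = α + β
  · rwa [← hξαβ]
  have hvanish : ∀ μ, Module.finrank F (rootSpace t β) ≤ Module.finrank F (rootSpace t μ) →
      μ + ξ ≠ α → μ + ξ ≠ β → μ h = 0 := by
    intro μ hμβ hα hβ
    by_contra hμ
    have hne : μ + ξ ≠ 0 := fun h0 => hμ <| by
      rw [eq_neg_of_add_eq_zero_left h0, LinearMap.neg_apply, hξh, neg_zero]
    have := hp.finrank_rootSpace_le hz hpz (hnil m hmn) hμ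
    have := hsmall _ hne hα hβ
    omega
  have hcancel : ∀ μ : Module.Dual F t, μ + (μ + ξ) = ξ := fun μ => by
    rw [← add_assoc, CharTwo.add_self_eq_zero_of_module (R := F), zero_add]
  have hα0 : α h = 0 := hvanish α hab (by simpa using hξ)
    fun e => hξαβ (by rw [← hcancel α, e])
  have hβ0 : β h = 0 := hvanish β le_rfl (fun e => hξαβ (by rw [← hcancel β, e, add_comm]))
    (by simpa using hξ)
  rw [LinearMap.add_apply, hα0, hβ0, add_zero]

end IsTwoMap

theorem statement10_general
    {F : Type*} [Field F] [CharP F 2]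
    {g : Type*} [LieRing g] [LieAlgebra F g] [FiniteDimensional F g]
    (p : g → g) (hp : IsTwoMap F p)
    (t : LieSubalgebra F g)
    (n : Submodule F g)
    (hn : ∀ x : g, x ∈ n ↔ x ∈ rootSpace t 0 ∧ IsTwoNilpotent p x)
    (hstd : ∀ x ∈ rootSpace t 0, ∀ y ∈ n, ⁅x, y⁆ ∈ n)
    (hdecomp : rootSpace t 0 = t.toSubmodule ⊔ n)
    (hdisj : Disjoint t.toSubmodule n)
    (t₁ t₂ t₃ : t)
    (htor1 : p (t₁ : g) = (t₁ : g)) (htor2 : p (t₂ : g) = (t₂ : g))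
    (htor3 : p (t₃ : g) = (t₃ : g))
    (hspan : Submodule.span F ({t₁, t₂, t₃} : Set t) = ⊤)
    (α β γ : Module.Dual F t)
    (hα : α t₁ = 1 ∧ α t₂ = 0 ∧ α t₃ = 0)
    (hβ : β t₁ = 0 ∧ β t₂ = 1 ∧ β t₃ = 0)
    (hγ : γ t₁ = 0 ∧ γ t₂ = 0 ∧ γ t₃ = 1)
    (hroots : rootSet t = ({α, β, γ, α + β, α + γ, β + γ, α + β + γ} :
      Set (Module.Dual F t)))
    (hab : Module.finrank F (rootSpace t β) ≤ Module.finrank F (rootSpace t α))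
    (hbig : ∀ ξ ∈ rootSet t, ξ ≠ α → ξ ≠ β →
      Module.finrank F (rootSpace t ξ) < Module.finrank F (rootSpace t β)) :
    ∀ x y : g,
      y ∈ Submodule.span F ({(t₃ : g), (t₁ : g) + (t₂ : g)} : Set g) ⊔ n ⊔
          (⨆ ξ ∈ rootSet t, rootSpace t ξ) →
      ⁅x, y⁆ ∈ Submodule.span F ({(t₃ : g), (t₁ : g) + (t₂ : g)} : Set g) ⊔ n ⊔
          (⨆ ξ ∈ rootSet t, rootSpace t ξ) := by
  set S := Submodule.span F ({(t₃ : g), (t₁ : g) + (t₂ : g)} : Set g)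
  have ht0 : t.toSubmodule ≤ rootSpace t 0 := hdecomp ▸ le_sup_left
  have hβroot : β ∈ rootSet t := by simp [hroots]
  have hsq : ∀ ξ ∈ rootSet t, ∀ z ∈ rootSpace t ξ, p z ∈ S ⊔ n := by
    intro ξ hξ z hz
    obtain ⟨h, hh, m, hmn, hpz⟩ :=
      Submodule.mem_sup.mp (hdecomp ▸ hp.map_mem_rootSpace_zero hz)
    refine Submodule.mem_sup.mpr ⟨h, ?_, m, hmn, hpz⟩
    refine coe_mem_span_of_add_apply_eq_zero hspan hα hβ (h := ⟨h, hh⟩) ?_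
    exact hp.add_apply_eq_zero_of_map_eq hdisj (fun m hm => hp.isNilpotent_ad ((hn m).mp hm).2)
      hab (fun _ => finrank_rootSpace_lt_of_ne hβroot hbig) hξ.1 hz hpz.symm hmn
  have htop : ⨆ lam, rootSpace t lam = ⊤ := by
    refine hp.iSup_rootSpace_eq_top (u := ![t₁, t₂, t₃]) (φ := ![α, β, γ]) ?_
      (fun i j => mem_rootSpace_zero_iff.mp (ht0 (Subtype.prop _)) _) ?_ ?_
    · intro i; fin_cases i <;> assumption
    · rwa [Matrix.range_cons, Matrix.range_cons, Matrix.range_cons_empty, Set.singleton_union,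
        Set.singleton_union]
    · intro i j; fin_cases i <;> fin_cases j <;> simp [hα, hβ, hγ]
  intro x y hy
  refine Submodule.iSup_induction (rootSpace t) (motive := fun x => ⁅x, y⁆ ∈ S ⊔ n ⊔ _)
    (htop ▸ Submodule.mem_top : x ∈ ⨆ lam, rootSpace t lam) (fun lam v hv => ?_) (by simp)
    (fun x₁ x₂ h₁ h₂ => by rw [add_lie]; exact add_mem h₁ h₂)
  refine lie_mem_sup_of_mem_rootSpace ?_ (fun m hm => ((hn m).mp hm).1) hstd ?_ hv hy
  · exact Submodule.span_le.mpr <| Set.insert_subset_iff.mpr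
      ⟨t₃.2, Set.singleton_subset_iff.mpr (add_mem t₁.2 t₂.2)⟩
  · intro ξ hξ v hv w hw
    rw [neg_eq_of_add_eq_zero_left (CharTwo.add_self_eq_zero_of_module (R := F) ξ)] at hv
    exact hp.lie_mem_of_forall_map_mem (hsq ξ hξ) hv hw

/-- if all seven roots occur, `dim g_α ≥ dim g_β` and
`dim g_β > dim g_ξ` for every root `ξ ∉ {α, β}`, then
`span{t3, t1 + t2} ⊕ n ⊕ ⊕_{ξ∈Δ} g_ξ` is an ideal of `g`. -/
theorem statement10
    {F : Type*} [Field F] [IsAlgClosed F] [CharP F 2]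
    {g : Type*} [LieRing g] [LieAlgebra F g] [FiniteDimensional F g]
    (p : g → g) (hp : IsTwoMap F p)
    (hcenter : LieAlgebra.center F g = ⊥)
    (t : LieSubalgebra F g) (hmax : IsMaxTorus F p t)
    (n : Submodule F g)
    (hn : ∀ x : g, x ∈ n ↔ x ∈ rootSpace t 0 ∧ IsTwoNilpotent p x)
    (hstd : ∀ x ∈ rootSpace t 0, ∀ y ∈ n, ⁅x, y⁆ ∈ n)
    (hdecomp : rootSpace t 0 = t.toSubmodule ⊔ n)
    (hdisj : Disjoint t.toSubmodule n)
    (hrank : ∀ s : LieSubalgebra F g, IsTorus F p s → Module.finrank F s ≤ 3)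
    (hdimt : Module.finrank F t = 3)
    (t₁ t₂ t₃ : t)
    (htor1 : p (t₁ : g) = (t₁ : g)) (htor2 : p (t₂ : g) = (t₂ : g))
    (htor3 : p (t₃ : g) = (t₃ : g))
    (hspan : Submodule.span F ({t₁, t₂, t₃} : Set t) = ⊤)
    (α β γ : Module.Dual F t)
    (hα : α t₁ = 1 ∧ α t₂ = 0 ∧ α t₃ = 0)
    (hβ : β t₁ = 0 ∧ β t₂ = 1 ∧ β t₃ = 0)
    (hγ : γ t₁ = 0 ∧ γ t₂ = 0 ∧ γ t₃ = 1)
    (hroots : rootSet t = ({α, β, γ, α + β, α + γ, β + γ, α + β + γ} :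
      Set (Module.Dual F t)))
    (hab : Module.finrank F (rootSpace t β) ≤ Module.finrank F (rootSpace t α))
    (hbig : ∀ ξ ∈ rootSet t, ξ ≠ α → ξ ≠ β →
      Module.finrank F (rootSpace t ξ) < Module.finrank F (rootSpace t β)) :
    ∀ x y : g,
      y ∈ Submodule.span F ({(t₃ : g), (t₁ : g) + (t₂ : g)} : Set g) ⊔ n ⊔
          (⨆ ξ ∈ rootSet t, rootSpace t ξ) →
      ⁅x, y⁆ ∈ Submodule.span F ({(t₃ : g), (t₁ : g) + (t₂ : g)} : Set g) ⊔ n ⊔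
          (⨆ ξ ∈ rootSet t, rootSpace t ξ) :=
  statement10_general p hp t n hn hstd hdecomp hdisj t₁ t₂ t₃ htor1 htor2 htor3 hspan α β γ hα hβ hγ
    hroots hab hbig
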